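/- (Divisibility Lemma) Let B, B' ∈ {0,1}^{c×n} and for T ⊆ [c] let ℓ_T = ℓ_T(B) and j_T = ℓ_T(B'). Then x^{B'} divides x^B up to symmetry if and only if for every order ideal J of 2^[c] generated by a nonempty subset of Supp(B') (i.e., J = ⟨E⟩ for some nonempty E ⊆ Supp(B')), one has Σ_{T∈J} j_T ≤ Σ_{T∈J} ℓ_T. -/

import Mathlib

open MvPolynomial Finset

noncomputable section

/-- The squarefree monomial `x^B` with exponent matrix `B`, columns given as subsets of `[c]`. -/
def matMon (K : Type*) [CommSemiring K] {c n : ℕ}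
    (B : Fin n → Finset (Fin c)) : MvPolynomial (Fin c × Fin n) K :=
  ∏ j : Fin n, ∏ i ∈ B j, X (i, j)

/-- `ℓ_T(B)`: the number of columns of `B` with support `T`. -/
def colCount {c n : ℕ} (B : Fin n → Finset (Fin c)) (T : Finset (Fin c)) : ℕ :=
  (univ.filter fun j => B j = T).card

/-- `x^{B'}` divides `x^B` up to symmetry: there is `σ ∈ Sym(n)` with `x^{B'} ∣ x^{σ·B}`. -/
def divSym (K : Type*) [Field K] {c n : ℕ} (B' B : Fin n → Finset (Fin c)) : Prop :=
  ∃ σ : Equiv.Perm (Fin n),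
    matMon K B' ∣ rename (fun v : Fin c × Fin n => (v.1, σ v.2)) (matMon K B)

/-- The exponent finsupp of `matMon B`. -/
def expF {c n : ℕ} (B : Fin n → Finset (Fin c)) : (Fin c × Fin n) →₀ ℕ :=
  ∑ j : Fin n, ∑ i ∈ B j, Finsupp.single (i, j) 1

lemma matMon_eq_monomial (K : Type*) [CommSemiring K] {c n : ℕ}
    (B : Fin n → Finset (Fin c)) : matMon K B = monomial (expF B) 1 := by
  rw [matMon, expF, monomial_sum_one]
  refine Finset.prod_congr rfl fun j _ => ?_
  rw [monomial_sum_one]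
  exact Finset.prod_congr rfl fun i _ => rfl

lemma expF_apply {c n : ℕ} (B : Fin n → Finset (Fin c)) (i : Fin c) (j : Fin n) :
    expF B (i, j) = if i ∈ B j then 1 else 0 := by
  classical
  rw [expF, Finsupp.finset_sum_apply]
  rw [Finset.sum_eq_single j]
  · rw [Finsupp.finset_sum_apply]
    simp [Finsupp.single_apply, Prod.ext_iff, Finset.sum_ite_eq']
  · intro b _ hb
    rw [Finsupp.finset_sum_apply]
    apply Finset.sum_eq_zero
    intro i' _
    rw [Finsupp.single_apply, if_neg]
    simp [Prod.ext_iff]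
    intro _; exact hb
  · simp

lemma matMon_dvd_iff (K : Type*) [Field K] {c n : ℕ} (B' C : Fin n → Finset (Fin c)) :
    matMon K B' ∣ matMon K C ↔ ∀ j, B' j ⊆ C j := by
  rw [matMon_eq_monomial, matMon_eq_monomial, monomial_dvd_monomial]
  simp only [one_ne_zero, false_or, dvd_refl, and_true]
  rw [Finsupp.le_def]
  constructor
  · intro h j i hi
    have := h (i, j)
    rw [expF_apply, expF_apply, if_pos hi] at this
    by_contra hC
    rw [if_neg hC] at this
    omega
  · rintro h ⟨i, j⟩
    rw [expF_apply, expF_apply]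
    by_cases hi : i ∈ B' j
    · rw [if_pos hi, if_pos (h j hi)]
    · simp [hi]

lemma rename_matMon (K : Type*) [CommSemiring K] {c n : ℕ} (σ : Equiv.Perm (Fin n))
    (B : Fin n → Finset (Fin c)) :
    rename (fun v : Fin c × Fin n => (v.1, σ v.2)) (matMon K B)
      = matMon K (fun j => B (σ.symm j)) := by
  rw [matMon, matMon, map_prod,
    ← Equiv.prod_comp σ (fun j => ∏ i ∈ B (σ.symm j), X (i, j) : Fin n → MvPolynomial _ K)]
  refine Finset.prod_congr rfl fun j _ => ?_
  rw [map_prod]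
  simp

lemma divSym_iff_perm (K : Type*) [Field K] {c n : ℕ} (B' B : Fin n → Finset (Fin c)) :
    divSym K B' B ↔ ∃ π : Equiv.Perm (Fin n), ∀ j, B' j ⊆ B (π j) := by
  unfold divSym
  constructor
  · rintro ⟨σ, h⟩
    rw [rename_matMon, matMon_dvd_iff] at h
    exact ⟨σ.symm, h⟩
  · rintro ⟨π, h⟩
    refine ⟨π.symm, ?_⟩
    rw [rename_matMon, matMon_dvd_iff]
    simpa using h

lemma sum_colCount {c n : ℕ} (B : Fin n → Finset (Fin c)) (F : Finset (Finset (Fin c))) :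
    ∑ T ∈ F, colCount B T = (univ.filter fun j => B j ∈ F).card := by
  classical
  rw [Finset.card_eq_sum_card_fiberwise (f := B) (s := univ.filter fun j => B j ∈ F) (t := F)
    (fun x hx => (mem_filter.mp hx).2)]
  refine Finset.sum_congr rfl fun T hT => ?_
  rw [colCount]
  congr 1
  ext j
  simp only [mem_filter, mem_univ, true_and]
  aesop

/-- **Divisibility Lemma.**  `x^{B'}` divides `x^B` up to symmetry iff for every order ideal
`⟨E⟩` of `2^[c]` generated by a nonempty subset `E` of `Supp(B')` one has
`∑_{T ∈ ⟨E⟩} ℓ_T(B') ≤ ∑_{T ∈ ⟨E⟩} ℓ_T(B)`. -/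
theorem divisibility_lemma (K : Type*) [Field K] {c n : ℕ} (hc : 0 < c)
    (B B' : Fin n → Finset (Fin c)) :
    divSym K B' B ↔
      ∀ E : Finset (Finset (Fin c)), E.Nonempty → E ⊆ univ.image B' →
        ∑ T ∈ univ.filter (fun S : Finset (Fin c) => ∃ T' ∈ E, T' ⊆ S), colCount B' T ≤
        ∑ T ∈ univ.filter (fun S : Finset (Fin c) => ∃ T' ∈ E, T' ⊆ S), colCount B T := by
  classical
  rw [divSym_iff_perm]
  constructor
  · rintro ⟨π, hπ⟩ E _ _
    rw [sum_colCount, sum_colCount]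
    apply Finset.card_le_card_of_injOn π
    · intro j hj
      simp only [Finset.mem_coe, mem_filter, mem_univ, true_and] at hj ⊢
      obtain ⟨T', hT', hsub⟩ := hj
      exact ⟨T', hT', hsub.trans (hπ j)⟩
    · exact fun a _ b _ h => π.injective h
  · intro h
    have hall : ∀ A : Finset (Fin n),
        A.card ≤ (A.biUnion fun j => univ.filter fun j' => B' j ⊆ B j').card := by
      intro A
      rcases A.eq_empty_or_nonempty with rfl | hA
      · simp
      set E := A.image B' with hEdef
      have hE : E.Nonempty := hA.image _
      have hEsub : E ⊆ univ.image B' :=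
        Finset.image_subset_image (Finset.subset_univ A)
      have key := h E hE hEsub
      rw [sum_colCount, sum_colCount] at key
      calc A.card ≤ (univ.filter fun j =>
              B' j ∈ univ.filter fun S : Finset (Fin c) => ∃ T' ∈ E, T' ⊆ S).card := by
            apply Finset.card_le_card
            intro a ha
            simp only [mem_filter, mem_univ, true_and]
            exact ⟨B' a, Finset.mem_image_of_mem _ ha, subset_rfl⟩
        _ ≤ (univ.filter fun j =>
              B j ∈ univ.filter fun S : Finset (Fin c) => ∃ T' ∈ E, T' ⊆ S).card := key
        _ ≤ (A.biUnion fun j => univ.filter fun j' => B' j ⊆ B j').card := by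
            apply Finset.card_le_card
            intro j' hj'
            simp only [mem_filter, mem_univ, true_and, mem_biUnion] at hj' ⊢
            obtain ⟨T', hT', hsub⟩ := hj'
            obtain ⟨a, ha, rfl⟩ := Finset.mem_image.mp hT'
            exact ⟨a, ha, hsub⟩
    obtain ⟨f, hf_inj, hf⟩ := (Finset.all_card_le_biUnion_card_iff_exists_injective
        (fun j => univ.filter fun j' => B' j ⊆ B j')).mp hall
    refine ⟨Equiv.ofBijective f ((Finite.injective_iff_bijective).mp hf_inj), fun j => ?_⟩
    have := hf j
    simp only [mem_filter, mem_univ, true_and] at this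
    exact this

end
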